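/- arXiv:2004.06611 — 6 statements merged into one kernel-verified Lean document; each statement's English description precedes it below -/
import Mathlib

section
/- Let p be an odd prime, and for nonzero u ∈ ℤ/pℤ define A_u = {(x, x²/u) : x ∈ ℤ/pℤ} ⊂ (ℤ/pℤ)². For nonzero u ≠ v in ℤ/pℤ and (a,b) ∈ (ℤ/pℤ)², the number of pairs (α, β) ∈ A_u × A_v with α - β = (a,b) equals 1 + χ(Δ), where χ is the Legendre symbol mod p and Δ = 4uv(a² - b(u-v)). -/
/-!
A pair `((x, x²/u), (y, y²/v))` has difference `(a, b)` exactly when `y = x - a` and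
`x²/u - (x - a)²/v = b`, so the pairs are counted by the roots `x` of the quadratic
`(v - u)x² + 2uax - ua² - buv`, whose discriminant is `Δ`. Since `u ≠ v` it is a genuine
quadratic, and completing the square (`x ↦ 2(v - u)x + 2ua`) matches its roots with the
square roots of `Δ`, of which there are `1 + χ(Δ)`.
-/

/-- The parabola-type set `A_u = {(x, x²/u) : x ∈ ZMod p}`. -/
def parabolaSet (p : ℕ) [NeZero p] (u : ZMod p) : Finset (ZMod p × ZMod p) :=
  (Finset.univ : Finset (ZMod p)).image (fun x => (x, x ^ 2 * u⁻¹))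

open Finset

theorem card_quadratic_eq_zero {F : Type*} [Field F] [Fintype F] [DecidableEq F]
    (hF : ringChar F ≠ 2) {a b c : F} (ha : a ≠ 0) :
    (#{x : F | a * (x * x) + b * x + c = 0} : ℤ) = 1 + quadraticChar F (discrim a b c) := by
  have : NeZero (2 : F) := ⟨Ring.two_ne_zero hF⟩
  let e : F ≃ F := (Equiv.mulLeft₀ (2 * a) (mul_ne_zero two_ne_zero ha)).trans (Equiv.addRight b)
  have hcard : #{x : F | a * (x * x) + b * x + c = 0} = #{y : F | y ^ 2 = discrim a b c} :=
    card_equiv e fun x => by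
      simp [e, quadratic_eq_zero_iff_discrim_eq_sq ha, eq_comm, mul_assoc]
  rw [hcard, ← Set.toFinset_ofPred, quadraticChar_card_sqrts hF, add_comm]

theorem mem_parabolaSet {p : ℕ} [NeZero p] {u : ZMod p} {q : ZMod p × ZMod p} :
    q ∈ parabolaSet p u ↔ q.2 = q.1 ^ 2 * u⁻¹ := by
  obtain ⟨x, y⟩ := q
  simp [parabolaSet, eq_comm]

theorem card_parabolaSet_diff_eq (p : ℕ) [NeZero p] (u v a b : ZMod p) :
    #((parabolaSet p u ×ˢ parabolaSet p v).filter
        (fun q : (ZMod p × ZMod p) × (ZMod p × ZMod p) => q.1 - q.2 = (a, b)))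
      = #{x : ZMod p | x ^ 2 * u⁻¹ - (x - a) ^ 2 * v⁻¹ = b} := by
  refine card_nbij' (fun q => q.1.1) (fun x => ((x, x ^ 2 * u⁻¹), (x - a, (x - a) ^ 2 * v⁻¹)))
    ?_ ?_ ?_ ?_
  · rintro ⟨⟨x, x'⟩, y, y'⟩ hq
    simp only [coe_filter, mem_product, mem_parabolaSet, Prod.mk_sub_mk, Prod.mk.injEq,
      Set.mem_ofPred_eq, mem_univ, true_and] at hq ⊢
    obtain ⟨⟨rfl, rfl⟩, rfl, hb⟩ := hq
    simpa using hb
  · intro x hx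
    simpa [mem_parabolaSet] using hx
  · rintro ⟨⟨x, x'⟩, y, y'⟩ hq
    simp only [coe_filter, mem_product, mem_parabolaSet, Prod.mk_sub_mk, Prod.mk.injEq,
      Set.mem_ofPred_eq] at hq ⊢
    obtain ⟨⟨rfl, rfl⟩, rfl, -⟩ := hq
    simp
  · intro x _
    rfl

theorem parabola_diff_eq_iff {K : Type*} [Field K] {u v a b x : K} (hu : u ≠ 0) (hv : v ≠ 0) :
    x ^ 2 * u⁻¹ - (x - a) ^ 2 * v⁻¹ = b ↔
      (v - u) * (x * x) + 2 * u * a * x + (-(u * a ^ 2) - b * u * v) = 0 := by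
  field_simp
  constructor <;> intro h <;> linear_combination h

/-- Let `p` be an odd prime, and for nonzero `u : ZMod p` let
`A_u = {(x, x²/u) : x ∈ ZMod p} ⊆ (ZMod p)²`.  For nonzero `u ≠ v` and any
`(a, b)`, the number of pairs `(α, β) ∈ A_u × A_v` with `α - β = (a, b)` equals
`1 + χ(Δ)` where `χ` is the quadratic character of `ZMod p` and
`Δ = 4uv(a² - b(u - v))`. -/
theorem stmt5 (p : ℕ) [Fact p.Prime] (hp : p ≠ 2) (u v a b : ZMod p)
    (hu : u ≠ 0) (hv : v ≠ 0) (huv : u ≠ v) :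
    (((parabolaSet p u ×ˢ parabolaSet p v).filter
        (fun q : (ZMod p × ZMod p) × (ZMod p × ZMod p) => q.1 - q.2 = (a, b))).card : ℤ)
      = 1 + quadraticChar (ZMod p) (4 * u * v * (a ^ 2 - b * (u - v))) := by
  have hchar : ringChar (ZMod p) ≠ 2 := by rwa [ZMod.ringChar_zmod_n]
  have hdiscrim : discrim (v - u) (2 * u * a) (-(u * a ^ 2) - b * u * v)
      = 4 * u * v * (a ^ 2 - b * (u - v)) := by
    rw [discrim]; ring
  rw [card_parabolaSet_diff_eq, ← hdiscrim,
    ← card_quadratic_eq_zero hchar (sub_ne_zero.mpr huv.symm)]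
  simp only [parabola_diff_eq_iff hu hv]
end

section
/- Let p be an odd prime and u, v, u', v' nonzero elements of ℤ/pℤ with u ≠ v, u' ≠ v', u - v = u' - v', and uvu'v' a quadratic non-residue mod p. Then for every element a of (ℤ/pℤ)², the number of representations of a as a difference of an element of A_u and an element of A_v, plus the number of representations of a as a difference of an element of A_{u'} and an element of A_{v'}, equals exactly 2. -/
open Finset

lemma card_rep (p : ℕ) [Fact p.Prime] (hp : p ≠ 2) (u v : ZMod p)
    (hu : u ≠ 0) (hv : v ≠ 0) (huv : u ≠ v) (a : ZMod p × ZMod p) :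
    (((parabolaSet p u ×ˢ parabolaSet p v).filter
        (fun q : (ZMod p × ZMod p) × (ZMod p × ZMod p) => q.1 - q.2 = a)).card : ℤ)
      = quadraticChar (ZMod p) (4 * u * v * (a.1 ^ 2 + (v - u) * a.2)) + 1 := by
  have hchar : ringChar (ZMod p) ≠ 2 := by
    rw [ZMod.ringChar_zmod_n]; exact hp
  have h2 : (2 : ZMod p) ≠ 0 := by
    intro h
    exact hchar (CharP.ringChar_of_prime_eq_zero Nat.prime_two (by exact_mod_cast h))
  have hA : v - u ≠ 0 := sub_ne_zero.mpr (Ne.symm huv)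
  -- step 1: card = number of x with the parabola equation
  have step1 : ((parabolaSet p u ×ˢ parabolaSet p v).filter
        (fun q : (ZMod p × ZMod p) × (ZMod p × ZMod p) => q.1 - q.2 = a)).card
      = (Finset.univ.filter (fun x : ZMod p =>
          x ^ 2 * u⁻¹ - (x - a.1) ^ 2 * v⁻¹ = a.2)).card := by
    refine Finset.card_bij' (fun q _ => q.1.1)
      (fun x _ => ((x, x ^ 2 * u⁻¹), (x - a.1, (x - a.1) ^ 2 * v⁻¹))) ?_ ?_ ?_ ?_
    · rintro ⟨q1, q2⟩ hq
      simp only [Finset.mem_filter, Finset.mem_product, parabolaSet, Finset.mem_image,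
        Finset.mem_univ, true_and] at hq ⊢
      obtain ⟨⟨⟨x, hx⟩, ⟨y, hy⟩⟩, hd⟩ := hq
      subst hx; subst hy
      rw [Prod.ext_iff] at hd
      simp only [Prod.fst_sub, Prod.snd_sub] at hd
      have hy : y = x - a.1 := by linear_combination -hd.1
      subst hy
      simpa using hd.2
    · intro x hx
      simp only [Finset.mem_filter, Finset.mem_univ, true_and] at hx
      simp only [Finset.mem_filter, Finset.mem_product, parabolaSet, Finset.mem_image,
        Finset.mem_univ, true_and]
      refine ⟨⟨⟨x, rfl⟩, ⟨x - a.1, rfl⟩⟩, ?_⟩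
      rw [Prod.ext_iff]
      exact ⟨by simp, by simpa using hx⟩
    · rintro ⟨q1, q2⟩ hq
      simp only [Finset.mem_filter, Finset.mem_product, parabolaSet, Finset.mem_image,
        Finset.mem_univ, true_and] at hq
      obtain ⟨⟨⟨x, hx⟩, ⟨y, hy⟩⟩, hd⟩ := hq
      subst hx; subst hy
      rw [Prod.ext_iff] at hd
      simp only [Prod.fst_sub, Prod.snd_sub] at hd
      have hy : y = x - a.1 := by linear_combination -hd.1
      subst hy
      rfl
    · intro x hx; rfl
  -- step 2: the equation is equivalent to a square-root equation
  have step2 : ∀ x : ZMod p,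
      (x ^ 2 * u⁻¹ - (x - a.1) ^ 2 * v⁻¹ = a.2) ↔
      ((2 * (v - u) * x + 2 * u * a.1) ^ 2 = 4 * u * v * (a.1 ^ 2 + (v - u) * a.2)) := by
    intro x
    constructor
    · intro h
      field_simp at h
      linear_combination 4 * (v - u) * h
    · intro h
      have hq : (v - u) * x ^ 2 + 2 * u * a.1 * x - u * a.1 ^ 2 - a.2 * u * v = 0 := by
        have h4 : (4 : ZMod p) * (v - u) ≠ 0 := by
          apply mul_ne_zero _ hA
          intro h4
          apply h2
          have : (4 : ZMod p) = 2 * 2 := by norm_num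
          rw [this] at h4
          rcases mul_eq_zero.mp h4 with h' | h' <;> exact h'
        have : (4 : ZMod p) * (v - u) *
            ((v - u) * x ^ 2 + 2 * u * a.1 * x - u * a.1 ^ 2 - a.2 * u * v) = 0 := by
          linear_combination h
        exact (mul_eq_zero.mp this).resolve_left h4
      field_simp
      linear_combination hq
  rw [step1]
  simp_rw [step2]
  -- step 3: change variable z = 2(v-u)x + 2u a.1
  have step3 : (Finset.univ.filter (fun x : ZMod p =>
        (2 * (v - u) * x + 2 * u * a.1) ^ 2 = 4 * u * v * (a.1 ^ 2 + (v - u) * a.2))).card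
      = (Finset.univ.filter (fun z : ZMod p =>
        z ^ 2 = 4 * u * v * (a.1 ^ 2 + (v - u) * a.2))).card := by
    have h2A : (2 : ZMod p) * (v - u) ≠ 0 := mul_ne_zero h2 hA
    apply Finset.card_bij' (fun x _ => 2 * (v - u) * x + 2 * u * a.1)
      (fun z _ => (2 * (v - u))⁻¹ * (z - 2 * u * a.1))
    · intro x hx
      simp only [Finset.mem_filter, Finset.mem_univ, true_and] at hx ⊢
      exact hx
    · intro z hz
      simp only [Finset.mem_filter, Finset.mem_univ, true_and] at hz ⊢
      rw [mul_inv_cancel_left₀ h2A]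
      simpa using hz
    · intro x hx
      rw [add_sub_cancel_right, inv_mul_cancel_left₀ h2A]
    · intro z hz
      rw [mul_inv_cancel_left₀ h2A, sub_add_cancel]
  rw [step3]
  have := quadraticChar_card_sqrts hchar (4 * u * v * (a.1 ^ 2 + (v - u) * a.2))
  rw [← this]
  congr 1
  rw [← Set.toFinset_setOf]

/-- Let `p` be an odd prime and `u, v, u', v'` nonzero elements of `ZMod p` with
`u ≠ v`, `u' ≠ v'`, `u - v = u' - v'` and `uvu'v'` a quadratic non-residue.
Then for every `a ∈ (ZMod p)²`, the number of representations of `a` as a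
difference of an element of `A_u` and an element of `A_v`, plus the number of
representations of `a` as a difference of an element of `A_{u'}` and an element
of `A_{v'}`, equals exactly `2`. -/
theorem stmt6 (p : ℕ) [Fact p.Prime] (hp : p ≠ 2) (u v u' v' : ZMod p)
    (hu : u ≠ 0) (hv : v ≠ 0) (hu' : u' ≠ 0) (hv' : v' ≠ 0)
    (huv : u ≠ v) (huv' : u' ≠ v') (hdiff : u - v = u' - v')
    (hnr : ¬ IsSquare (u * v * u' * v')) (a : ZMod p × ZMod p) :
    ((parabolaSet p u ×ˢ parabolaSet p v).filter
        (fun q : (ZMod p × ZMod p) × (ZMod p × ZMod p) => q.1 - q.2 = a)).card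
      + ((parabolaSet p u' ×ˢ parabolaSet p v').filter
        (fun q : (ZMod p × ZMod p) × (ZMod p × ZMod p) => q.1 - q.2 = a)).card = 2 := by
  have h1 := card_rep p hp u v hu hv huv a
  have h2 := card_rep p hp u' v' hu' hv' huv' a
  have hsub : v' - u' = v - u := by linear_combination hdiff
  rw [hsub] at h2
  set t := a.1 ^ 2 + (v - u) * a.2 with ht
  have h2ne : (2 : ZMod p) ≠ 0 := by
    have hchar : ringChar (ZMod p) ≠ 2 := by rw [ZMod.ringChar_zmod_n]; exact hp
    intro h
    exact hchar (CharP.ringChar_of_prime_eq_zero Nat.prime_two (by exact_mod_cast h))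
  have h4ne : (4 : ZMod p) ≠ 0 := by
    intro h
    apply h2ne
    have : (4 : ZMod p) = 2 * 2 := by norm_num
    rw [this] at h
    rcases mul_eq_zero.mp h with h' | h' <;> exact h'
  have key : quadraticChar (ZMod p) (4 * u * v * t)
      + quadraticChar (ZMod p) (4 * u' * v' * t) = 0 := by
    by_cases htz : t = 0
    · simp [htz]
    · have hD1 : 4 * u * v * t ≠ 0 := by
        exact mul_ne_zero (mul_ne_zero (mul_ne_zero h4ne hu) hv) htz
      have hD2 : 4 * u' * v' * t ≠ 0 := by
        exact mul_ne_zero (mul_ne_zero (mul_ne_zero h4ne hu') hv') htz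
      have hprod : quadraticChar (ZMod p) (4 * u * v * t)
          * quadraticChar (ZMod p) (4 * u' * v' * t) = -1 := by
        rw [← map_mul]
        have heq : (4 * u * v * t) * (4 * u' * v' * t) = (4 * t) ^ 2 * (u * v * u' * v') := by
          ring
        rw [heq, map_mul, quadraticChar_sq_one' (mul_ne_zero h4ne htz),
          quadraticChar_neg_one_iff_not_isSquare.mpr hnr]
        ring
      rcases quadraticChar_dichotomy hD1 with h | h <;>
        rcases quadraticChar_dichotomy hD2 with h' | h' <;>
        rw [h, h'] <;> rw [h, h'] at hprod <;> omega
  have : (((parabolaSet p u ×ˢ parabolaSet p v).filter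
        (fun q : (ZMod p × ZMod p) × (ZMod p × ZMod p) => q.1 - q.2 = a)).card : ℤ)
      + (((parabolaSet p u' ×ˢ parabolaSet p v').filter
        (fun q : (ZMod p × ZMod p) × (ZMod p × ZMod p) => q.1 - q.2 = a)).card : ℤ) = 2 := by
    rw [h1, h2]
    linarith [key]
  exact_mod_cast this
end

section
/- Let A ⊆ (ℤ/pℤ)² be a g-difference set of size m (p prime). Then for every positive integer s ≥ 1, there exists a g(s-1)-difference set C ⊆ ℤ/(p²s)ℤ of size |C| = ms. -/
private def epsN (u v : ℕ) : ℕ := if u < v then 1 else 0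

private lemma epsN_le (u v : ℕ) : epsN u v ≤ 1 := by
  unfold epsN; split <;> omega

private lemma zmod_val_sub_int {p : ℕ} [NeZero p] (a b : ZMod p) :
    (a.val : ℤ) = (b.val : ℤ) + ((a - b).val : ℤ) - p * (epsN a.val b.val : ℤ) := by
  have h1 : ((↑a.val - ↑b.val - ↑((a - b).val) : ℤ) : ZMod p) = 0 := by
    push_cast [ZMod.natCast_zmod_val]
    ring
  rw [ZMod.intCast_zmod_eq_zero_iff_dvd] at h1
  obtain ⟨c, hc⟩ := h1
  have ha := ZMod.val_lt a
  have hb := ZMod.val_lt b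
  have hr := ZMod.val_lt (a - b)
  have hp : 0 < (p : ℤ) := by exact_mod_cast (NeZero.pos p)
  have hcase : c = 0 ∨ c = -1 := by
    rcases le_or_gt c (-2) with h | h
    · exfalso
      have h2 : (p : ℤ) * c ≤ p * (-2) := mul_le_mul_of_nonneg_left h hp.le
      have h3 : (0 : ℤ) ≤ a.val := by positivity
      have h4 : (b.val : ℤ) < p := by exact_mod_cast hb
      have h5 : ((a - b).val : ℤ) < p := by exact_mod_cast hr
      linarith
    rcases le_or_gt 1 c with h2 | h2
    · exfalso
      have h3 : (p : ℤ) * 1 ≤ p * c := mul_le_mul_of_nonneg_left h2 hp.le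
      have h4 : (a.val : ℤ) < p := by exact_mod_cast ha
      have h5 : (0 : ℤ) ≤ b.val := by positivity
      have h6 : (0 : ℤ) ≤ (a - b).val := by positivity
      linarith
    omega
  unfold epsN
  rcases hcase with rfl | rfl <;> split <;> omega

private lemma cast_sub_eq {n : ℕ} [NeZero n] (N1 N2 X : ℕ)
    (h : (n : ℤ) ∣ (N1 : ℤ) - N2 - X) : (N1 : ZMod n) - N2 = (X : ZMod n) := by
  have h0 : (((N1 : ℤ) - N2 - X : ℤ) : ZMod n) = 0 :=
    (ZMod.intCast_zmod_eq_zero_iff_dvd _ _).mpr h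
  push_cast at h0
  linear_combination h0

private def fD (p s : ℕ) (q : (ZMod p × ZMod p) × ℕ) : ZMod (p ^ 2 * s) :=
  ((q.1.1.val + p * q.2 + p * s * q.1.2.val : ℕ) : ZMod (p ^ 2 * s))

private lemma fD_inj {p s : ℕ} (hp : 1 < p) (a b a' b' : ZMod p) (c c' : ℕ)
    (h2 : c < s) (h2' : c' < s) (h : fD p s ((a, b), c) = fD p s ((a', b'), c')) :
    a = a' ∧ b = b' ∧ c = c' := by
  haveI : NeZero p := ⟨by omega⟩
  have hs : 0 < s := by omega
  have h : ((a.val + p * c + p * s * b.val : ℕ) : ZMod (p ^ 2 * s))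
      = ((a'.val + p * c' + p * s * b'.val : ℕ) : ZMod (p ^ 2 * s)) := h
  have ha := ZMod.val_lt a
  have hb := ZMod.val_lt b
  have ha' := ZMod.val_lt a'
  have hb' := ZMod.val_lt b'
  have hbound : ∀ (u v w : ℕ), u < p → w < s → v < p → u + p * w + p * s * v < p ^ 2 * s := by
    intro u v w hu hw hv
    obtain ⟨s', rfl⟩ : ∃ s', s = s' + 1 := ⟨s - 1, by omega⟩
    obtain ⟨p', rfl⟩ : ∃ p', p = p' + 2 := ⟨p - 2, by omega⟩
    have H1 : (p' + 2) * w ≤ (p' + 2) * s' := Nat.mul_le_mul_left _ (by omega)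
    have H2 : (p' + 2) * (s' + 1) * v ≤ (p' + 2) * (s' + 1) * (p' + 1) :=
      Nat.mul_le_mul_left _ (by omega)
    nlinarith [H1, H2]
  have e := congrArg ZMod.val h
  rw [ZMod.val_cast_of_lt (hbound _ _ _ ha h2 hb),
      ZMod.val_cast_of_lt (hbound _ _ _ ha' h2' hb')] at e
  have hc2 : c < s := h2
  have hc2' : c' < s := h2'
  have g1 : p * (c + s * b.val) = p * c + p * s * b.val := by ring
  have g2 : p * (c' + s * b'.val) = p * c' + p * s * b'.val := by ring
  have e2 : a.val + p * (c + s * b.val) = a'.val + p * (c' + s * b'.val) := by omega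
  have d1 : a.val = a'.val := by
    have := congrArg (· % p) e2
    simpa [Nat.add_mul_mod_self_left, Nat.mod_eq_of_lt ha, Nat.mod_eq_of_lt ha'] using this
  have e3 : p * (c + s * b.val) = p * (c' + s * b'.val) := by omega
  have d2 : c + s * b.val = c' + s * b'.val :=
    Nat.eq_of_mul_eq_mul_left (by omega) e3
  have d3 : c = c' := by
    have := congrArg (· % s) d2
    simpa [Nat.add_mul_mod_self_left, Nat.mod_eq_of_lt hc2, Nat.mod_eq_of_lt hc2'] using this
  have d4 : b.val = b'.val := Nat.eq_of_mul_eq_mul_left hs (by omega)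
  exact ⟨ZMod.val_injective _ d1, ZMod.val_injective _ d4, d3⟩

private def phi0 (p s k : ℕ) (Pj : ((ZMod p × ZMod p) × (ZMod p × ZMod p)) × ℕ) :
    ZMod (p ^ 2 * s) × ZMod (p ^ 2 * s) :=
  (fD p s (Pj.1.1, Pj.2 + k + epsN Pj.1.1.1.val Pj.1.2.1.val), fD p s (Pj.1.2, Pj.2))

private def phi1 (p s k : ℕ) (Pj : ((ZMod p × ZMod p) × (ZMod p × ZMod p)) × ℕ) :
    ZMod (p ^ 2 * s) × ZMod (p ^ 2 * s) :=
  (fD p s (Pj.1.1, Pj.2), fD p s (Pj.1.2, Pj.2 + (s - k - epsN Pj.1.1.1.val Pj.1.2.1.val)))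

private lemma phi0_inj {p s k : ℕ} (hp : 1 < p) (hks : k < s)
    (Pj Pj' : ((ZMod p × ZMod p) × (ZMod p × ZMod p)) × ℕ)
    (hj : Pj.2 < s - 1 - k) (hj' : Pj'.2 < s - 1 - k)
    (h : phi0 p s k Pj = phi0 p s k Pj') : Pj = Pj' := by
  have hE := epsN_le Pj.1.1.1.val Pj.1.2.1.val
  have hE' := epsN_le Pj'.1.1.1.val Pj'.1.2.1.val
  have h1 : fD p s ((Pj.1.1.1, Pj.1.1.2), Pj.2 + k + epsN Pj.1.1.1.val Pj.1.2.1.val)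
      = fD p s ((Pj'.1.1.1, Pj'.1.1.2), Pj'.2 + k + epsN Pj'.1.1.1.val Pj'.1.2.1.val) :=
    congrArg Prod.fst h
  have h2 : fD p s ((Pj.1.2.1, Pj.1.2.2), Pj.2) = fD p s ((Pj'.1.2.1, Pj'.1.2.2), Pj'.2) :=
    congrArg Prod.snd h
  obtain ⟨e1, e2, e3⟩ := fD_inj hp _ _ _ _ _ _ (by omega) (by omega) h2
  obtain ⟨e4, e5, _⟩ := fD_inj hp _ _ _ _ _ _ (by omega) (by omega) h1
  exact Prod.ext (Prod.ext (Prod.ext e4 e5) (Prod.ext e1 e2)) e3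

private lemma phi1_inj {p s k : ℕ} (hp : 1 < p) (hks : k < s)
    (Pj Pj' : ((ZMod p × ZMod p) × (ZMod p × ZMod p)) × ℕ)
    (hj : Pj.2 < k) (hj' : Pj'.2 < k)
    (h : phi1 p s k Pj = phi1 p s k Pj') : Pj = Pj' := by
  have hE := epsN_le Pj.1.1.1.val Pj.1.2.1.val
  have hE' := epsN_le Pj'.1.1.1.val Pj'.1.2.1.val
  have h1 : fD p s ((Pj.1.1.1, Pj.1.1.2), Pj.2) = fD p s ((Pj'.1.1.1, Pj'.1.1.2), Pj'.2) :=
    congrArg Prod.fst h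
  have h2 : fD p s ((Pj.1.2.1, Pj.1.2.2), Pj.2 + (s - k - epsN Pj.1.1.1.val Pj.1.2.1.val))
      = fD p s ((Pj'.1.2.1, Pj'.1.2.2), Pj'.2 + (s - k - epsN Pj'.1.1.1.val Pj'.1.2.1.val)) :=
    congrArg Prod.snd h
  obtain ⟨e1, e2, e3⟩ := fD_inj hp _ _ _ _ _ _ (by omega) (by omega) h1
  obtain ⟨e4, e5, _⟩ := fD_inj hp _ _ _ _ _ _ (by omega) (by omega) h2
  exact Prod.ext (Prod.ext (Prod.ext e1 e2) (Prod.ext e4 e5)) e3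

private lemma phi01_fst {p s k : ℕ} (hp : 1 < p) (hks : k < s)
    (Pj Pj' : ((ZMod p × ZMod p) × (ZMod p × ZMod p)) × ℕ)
    (hj : Pj.2 < s - 1 - k) (hj' : Pj'.2 < k)
    (h : phi0 p s k Pj = phi1 p s k Pj') : Pj.1 = Pj'.1 := by
  have hE := epsN_le Pj.1.1.1.val Pj.1.2.1.val
  have hE' := epsN_le Pj'.1.1.1.val Pj'.1.2.1.val
  have h1 : fD p s ((Pj.1.1.1, Pj.1.1.2), Pj.2 + k + epsN Pj.1.1.1.val Pj.1.2.1.val)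
      = fD p s ((Pj'.1.1.1, Pj'.1.1.2), Pj'.2) := congrArg Prod.fst h
  have h2 : fD p s ((Pj.1.2.1, Pj.1.2.2), Pj.2)
      = fD p s ((Pj'.1.2.1, Pj'.1.2.2), Pj'.2 + (s - k - epsN Pj'.1.1.1.val Pj'.1.2.1.val)) :=
    congrArg Prod.snd h
  obtain ⟨e1, e2, _⟩ := fD_inj hp _ _ _ _ _ _ (by omega) (by omega) h1
  obtain ⟨e4, e5, _⟩ := fD_inj hp _ _ _ _ _ _ (by omega) (by omega) h2
  exact Prod.ext (Prod.ext e1 e2) (Prod.ext e4 e5)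


/-- If `A ⊆ (ℤ/pℤ)²` is a `g`-difference set of size `m` (`p` prime), then for every
`s ≥ 1` there exists a `g(s-1)`-difference set `C ⊆ ℤ/p²sℤ` of size `ms`. -/
theorem stmt7 (p : ℕ) [Fact p.Prime] (g m s : ℕ) (hs : 1 ≤ s)
    (A : Finset (ZMod p × ZMod p))
    (hA : ∀ x : ZMod p × ZMod p,
      g ≤ ((A ×ˢ A).filter (fun q => q.1 - q.2 = x)).card)
    (hm : A.card = m) :
    ∃ C : Finset (ZMod (p ^ 2 * s)),
      (∀ x : ZMod (p ^ 2 * s),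
        g * (s - 1) ≤ ((C ×ˢ C).filter (fun q => q.1 - q.2 = x)).card) ∧
      C.card = m * s := by
  classical
  have hp : p.Prime := Fact.out
  have hp1 : 1 < p := hp.one_lt
  haveI : NeZero p := ⟨by omega⟩
  have hn0 : 0 < p ^ 2 * s := by
    have h2 : 0 < p ^ 2 := by positivity
    exact Nat.mul_pos h2 hs
  haveI : NeZero (p ^ 2 * s) := ⟨hn0.ne'⟩
  refine ⟨(A ×ˢ Finset.range s).image (fD p s), ?_, ?_⟩
  · intro x
    set C := (A ×ˢ Finset.range s).image (fD p s) with hC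
    set X := x.val with hXdef
    have hXlt : X < p ^ 2 * s := x.val_lt
    set v0 := X % p with hv0
    set Y := X / p with hYdef
    set k := Y % s with hkdef
    set q0 := Y / s with hq0def
    have hks : k < s := Nat.mod_lt _ (by omega)
    have hv0p : v0 < p := Nat.mod_lt _ (by omega)
    have hYlt : Y < p * s := by
      apply Nat.div_lt_of_lt_mul
      have h : p ^ 2 * s = p * (p * s) := by ring
      omega
    have hq0p : q0 < p := by
      apply Nat.div_lt_of_lt_mul
      have h : p * s = s * p := by ring
      omega
    set xb : ZMod p := ((v0 : ℕ) : ZMod p) with hxb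
    set t0 : ZMod p := ((q0 : ℕ) : ZMod p) with ht0
    set t1 : ZMod p := ((q0 + 1 : ℕ) : ZMod p) with ht1
    have hxbv : xb.val = v0 := ZMod.val_cast_of_lt hv0p
    have ht0v : t0.val = q0 := ZMod.val_cast_of_lt hq0p
    have ht1v : p * ((q0 + 1) / p) + t1.val = q0 + 1 := by
      rw [ht1, ZMod.val_natCast]
      exact Nat.div_add_mod _ _
    have ht01 : t0 ≠ t1 := by
      intro h
      rw [ht0, ht1, ZMod.natCast_eq_natCast_iff] at h
      have h2 := (Nat.modEq_iff_dvd' (by omega)).mp h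
      have h3 := Nat.le_of_dvd (by omega) h2
      omega
    set S0 := (A ×ˢ A).filter (fun q => q.1 - q.2 = (xb, t0)) with hS0
    set S1 := (A ×ˢ A).filter (fun q => q.1 - q.2 = (xb, t1)) with hS1
    have eX : p * Y + v0 = X := Nat.div_add_mod X p
    have eY : s * q0 + k = Y := Nat.div_add_mod Y s
    have eXz : (p : ℤ) * Y + v0 = X := by exact_mod_cast eX
    have eYz : (s : ℤ) * q0 + k = Y := by exact_mod_cast eY
    have hx : ((X : ℕ) : ZMod (p ^ 2 * s)) = x := ZMod.natCast_zmod_val x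
    -- key difference identities
    have key0 : ∀ P : (ZMod p × ZMod p) × (ZMod p × ZMod p), P ∈ S0 → ∀ j : ℕ,
        fD p s (P.1, j + k + epsN P.1.1.val P.2.1.val) - fD p s (P.2, j) = x := by
      intro P hP j
      have hPd := (Finset.mem_filter.mp hP).2
      have hd1 : P.1.1 - P.2.1 = xb := by
        have h := congrArg Prod.fst hPd; simpa using h
      have hd2 : P.1.2 - P.2.2 = t0 := by
        have h := congrArg Prod.snd hPd; simpa using h
      have e1 : (P.1.1.val : ℤ)
          = P.2.1.val + v0 - p * (epsN P.1.1.val P.2.1.val : ℤ) := by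
        have h := zmod_val_sub_int P.1.1 P.2.1
        rw [hd1, hxbv] at h
        exact h
      have e2 : (P.1.2.val : ℤ)
          = P.2.2.val + q0 - p * (epsN P.1.2.val P.2.2.val : ℤ) := by
        have h := zmod_val_sub_int P.1.2 P.2.2
        rw [hd2, ht0v] at h
        exact h
      rw [← hx]
      refine cast_sub_eq _ _ _ ⟨-(epsN P.1.2.val P.2.2.val : ℤ), ?_⟩
      push_cast
      linear_combination e1 + (p : ℤ) * (s : ℤ) * e2 + eXz + (p : ℤ) * eYz
    have key1 : ∀ P : (ZMod p × ZMod p) × (ZMod p × ZMod p), P ∈ S1 → ∀ j : ℕ,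
        fD p s (P.1, j) - fD p s (P.2, j + (s - k - epsN P.1.1.val P.2.1.val)) = x := by
      intro P hP j
      have hPd := (Finset.mem_filter.mp hP).2
      have hd1 : P.1.1 - P.2.1 = xb := by
        have h := congrArg Prod.fst hPd; simpa using h
      have hd2 : P.1.2 - P.2.2 = t1 := by
        have h := congrArg Prod.snd hPd; simpa using h
      have e1 : (P.1.1.val : ℤ)
          = P.2.1.val + v0 - p * (epsN P.1.1.val P.2.1.val : ℤ) := by
        have h := zmod_val_sub_int P.1.1 P.2.1
        rw [hd1, hxbv] at h
        exact h
      have e2 : (P.1.2.val : ℤ)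
          = P.2.2.val + t1.val - p * (epsN P.1.2.val P.2.2.val : ℤ) := by
        have h := zmod_val_sub_int P.1.2 P.2.2
        rw [hd2] at h
        exact h
      have hw : (p : ℤ) * ((q0 + 1) / p) + t1.val = q0 + 1 := by exact_mod_cast ht1v
      have hEle := epsN_le P.1.1.val P.2.1.val
      have hc2 : ((s - k - epsN P.1.1.val P.2.1.val : ℕ) : ℤ)
          = s - k - epsN P.1.1.val P.2.1.val := by omega
      rw [← hx]
      refine cast_sub_eq _ _ _
        ⟨-(((q0 + 1) / p : ℕ) + (epsN P.1.2.val P.2.2.val : ℤ)), ?_⟩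
      push_cast
      rw [hc2]
      linear_combination e1 + (p : ℤ) * (s : ℤ) * e2 + eXz + (p : ℤ) * eYz
        + (p : ℤ) * (s : ℤ) * hw
    -- membership
    have hmemC : ∀ α : ZMod p × ZMod p, α ∈ A → ∀ c : ℕ, c < s → fD p s (α, c) ∈ C := by
      intro α hα c hc
      exact Finset.mem_image_of_mem _
        (Finset.mem_product.mpr ⟨hα, Finset.mem_range.mpr hc⟩)
    set T0 := S0 ×ˢ Finset.range (s - 1 - k) with hT0
    set T1 := S1 ×ˢ Finset.range k with hT1
    have hsub0 : T0.image (phi0 p s k) ⊆ (C ×ˢ C).filter (fun q => q.1 - q.2 = x) := by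
      intro z hz
      obtain ⟨Pj, hPj, rfl⟩ := Finset.mem_image.mp hz
      obtain ⟨hP, hj⟩ := Finset.mem_product.mp hPj
      rw [Finset.mem_range] at hj
      have hPA := (Finset.mem_filter.mp hP).1
      obtain ⟨h1A, h2A⟩ := Finset.mem_product.mp hPA
      have hEle := epsN_le Pj.1.1.1.val Pj.1.2.1.val
      refine Finset.mem_filter.mpr ⟨Finset.mem_product.mpr ⟨?_, ?_⟩, ?_⟩
      · exact hmemC _ h1A _ (by omega)
      · exact hmemC _ h2A _ (by omega)
      · exact key0 Pj.1 hP Pj.2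
    have hsub1 : T1.image (phi1 p s k) ⊆ (C ×ˢ C).filter (fun q => q.1 - q.2 = x) := by
      intro z hz
      obtain ⟨Pj, hPj, rfl⟩ := Finset.mem_image.mp hz
      obtain ⟨hP, hj⟩ := Finset.mem_product.mp hPj
      rw [Finset.mem_range] at hj
      have hPA := (Finset.mem_filter.mp hP).1
      obtain ⟨h1A, h2A⟩ := Finset.mem_product.mp hPA
      have hEle := epsN_le Pj.1.1.1.val Pj.1.2.1.val
      refine Finset.mem_filter.mpr ⟨Finset.mem_product.mpr ⟨?_, ?_⟩, ?_⟩
      · exact hmemC _ h1A _ (by omega)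
      · exact hmemC _ h2A _ (by omega)
      · exact key1 Pj.1 hP Pj.2
    have hdisj : Disjoint (T0.image (phi0 p s k)) (T1.image (phi1 p s k)) := by
      rw [Finset.disjoint_left]
      intro z h0 h1
      obtain ⟨Pj, hPj, hz0⟩ := Finset.mem_image.mp h0
      obtain ⟨Pj', hPj', hz1⟩ := Finset.mem_image.mp h1
      obtain ⟨hP, hj⟩ := Finset.mem_product.mp hPj
      obtain ⟨hP', hj'⟩ := Finset.mem_product.mp hPj'
      rw [Finset.mem_range] at hj hj'
      have hfst := phi01_fst hp1 hks Pj Pj' hj hj' (hz0.trans hz1.symm)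
      have hd := (Finset.mem_filter.mp hP).2
      have hd' := (Finset.mem_filter.mp hP').2
      rw [hfst] at hd
      rw [hd] at hd'
      exact ht01 (Prod.ext_iff.mp hd').2
    have hcard0 : (T0.image (phi0 p s k)).card = S0.card * (s - 1 - k) := by
      rw [Finset.card_image_of_injOn, hT0, Finset.card_product, Finset.card_range]
      intro a ha b hb hab
      rw [hT0] at ha hb
      simp only [Finset.mem_coe, Finset.mem_product, Finset.mem_range] at ha hb
      exact phi0_inj hp1 hks a b ha.2 hb.2 hab
    have hcard1 : (T1.image (phi1 p s k)).card = S1.card * k := by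
      rw [Finset.card_image_of_injOn, hT1, Finset.card_product, Finset.card_range]
      intro a ha b hb hab
      rw [hT1] at ha hb
      simp only [Finset.mem_coe, Finset.mem_product, Finset.mem_range] at ha hb
      exact phi1_inj hp1 hks a b ha.2 hb.2 hab
    calc g * (s - 1) = g * (s - 1 - k) + g * k := by
          rw [← Nat.mul_add]; congr 1; omega
      _ ≤ S0.card * (s - 1 - k) + S1.card * k :=
          Nat.add_le_add (Nat.mul_le_mul_right _ (hA (xb, t0)))
            (Nat.mul_le_mul_right _ (hA (xb, t1)))
      _ = (T0.image (phi0 p s k)).card + (T1.image (phi1 p s k)).card := by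
          rw [hcard0, hcard1]
      _ = (T0.image (phi0 p s k) ∪ T1.image (phi1 p s k)).card :=
          (Finset.card_union_of_disjoint hdisj).symm
      _ ≤ ((C ×ˢ C).filter (fun q => q.1 - q.2 = x)).card :=
          Finset.card_le_card (Finset.union_subset hsub0 hsub1)
  · rw [Finset.card_image_of_injOn, Finset.card_product, Finset.card_range, hm]
    intro a ha b hb hab
    simp only [Finset.coe_product, Set.mem_prod, Finset.mem_coe, Finset.coe_range,
      Set.mem_Iio] at ha hb
    obtain ⟨e1, e2, e3⟩ := fD_inj hp1 a.1.1 a.1.2 b.1.1 b.1.2 a.2 b.2 ha.2 hb.2 hab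
    exact Prod.ext (Prod.ext e1 e2) e3
end

section
/- Let A ⊂ ℤ be a g1-difference set for [N] of size k, and let C ⊆ ℤ/qℤ be a g2-difference set of size ℓ. Then the set B = {qa + c : a ∈ A, c ∈ C̄}, where C̄ ⊆ {1,...,q} is the set of representatives of C, is a g1·g2-difference set for [qN] of size kℓ. -/
/-!
Write `b = q a + c` with `c` in the window `C̄ ⊆ [1, q]`; since the window has length `q`, this
decomposition is unique, which gives `|B| = kℓ` and makes the counting below injective.
For `m ∈ [1, qN]`, each of the at least `g₂` pairs `(c₁, c₂) ∈ C̄²` with `c₁ - c₂ ≡ m (mod q)`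
leaves a quotient `s = (m - (c₁ - c₂)) / q ∈ [0, N]`, because `|c₁ - c₂| < q`; every one of the
at least `g₁` pairs `(a₁, a₂) ∈ A²` with `a₁ - a₂ = s` then yields `m = (q a₁ + c₁) - (q a₂ + c₂)`.
The case `s = 0` is covered by the diagonal of `A`, and `|A| ≥ g₁` because the representations
of `1` inject into `A`.
-/

open Finset

section DiffCount

variable {α β : Type*} [AddGroup β] [DecidableEq β]

def diffCount (A : Finset β) (m : β) : ℕ :=
  ((A ×ˢ A).filter (fun p => p.1 - p.2 = m)).card

lemma diffCount_zero (A : Finset β) : diffCount A 0 = A.card := by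
  rw [diffCount, ← diag_card A]
  congr 1
  ext ⟨a, b⟩
  simp only [mem_filter, mem_product, sub_eq_zero, mem_diag]
  constructor
  · rintro ⟨⟨ha, -⟩, rfl⟩
    exact ⟨ha, rfl⟩
  · rintro ⟨ha, rfl⟩
    exact ⟨⟨ha, ha⟩, rfl⟩

lemma diffCount_le_card (A : Finset β) (m : β) : diffCount A m ≤ A.card := by
  refine card_le_card_of_injOn Prod.fst (fun p hp => (mem_product.1 (mem_filter.1 hp).1).1) ?_
  intro p hp p' hp' h
  have hm : p.1 - p.2 = p'.1 - p'.2 := (mem_filter.1 hp).2.trans (mem_filter.1 hp').2.symm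
  rw [show p.1 = p'.1 from h, sub_right_inj] at hm
  exact Prod.ext h hm

lemma card_filter_sub_eq_diffCount_image {S : Finset α} {f : α → β} (hf : Set.InjOn f S)
    (y : β) : ((S ×ˢ S).filter (fun p => f p.1 - f p.2 = y)).card = diffCount (S.image f) y := by
  refine card_nbij (fun p => (f p.1, f p.2)) ?_ ?_ ?_
  · intro p hp
    simp only [coe_filter, mem_product, Set.mem_ofPred_eq] at hp ⊢
    exact ⟨⟨mem_image_of_mem f hp.1.1, mem_image_of_mem f hp.1.2⟩, hp.2⟩
  · intro p hp p' hp' h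
    simp only [coe_filter, mem_product, Set.mem_ofPred_eq, Prod.mk.injEq] at hp hp' h
    exact Prod.ext (hf hp.1.1 hp'.1.1 h.1) (hf hp.1.2 hp'.1.2 h.2)
  · rintro ⟨x, x'⟩ hx
    simp only [coe_filter, mem_product, mem_image, Set.mem_ofPred_eq] at hx
    obtain ⟨⟨⟨c, hc, rfl⟩, ⟨c', hc', rfl⟩⟩, hy⟩ := hx
    exact ⟨(c, c'), by simpa using ⟨⟨hc, hc'⟩, hy⟩, rfl⟩

end DiffCount

lemma Int.eq_of_mul_add_eq_mul_add {q a a' c c' : ℤ} (hc : |c - c'| < q)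
    (h : q * a + c = q * a' + c') : a = a' ∧ c = c' := by
  have hcc : c = c' :=
    sub_eq_zero.1 <| Int.eq_zero_of_abs_lt_dvd ⟨a' - a, by linarith [mul_sub q a' a]⟩ hc
  subst hcc
  have hq : q ≠ 0 := by rintro rfl; simp at hc
  exact ⟨mul_left_cancel₀ hq (by linarith), rfl⟩

lemma Int.ediv_mem_Icc_of_dvd_sub {q m d N : ℤ} (hq : 0 < q) (hd : |d| < q) (hm : 1 ≤ m)
    (hmN : m ≤ q * N) (hdvd : q ∣ m - d) : (m - d) / q ∈ Set.Icc 0 N := by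
  obtain ⟨s, hs⟩ := hdvd
  rw [hs, Int.mul_ediv_cancel_left _ hq.ne']
  rw [abs_lt] at hd
  constructor <;> nlinarith

lemma le_diffCount_of_mem_Icc {A : Finset ℤ} {g N : ℕ}
    (hA : ∀ m : ℤ, 1 ≤ m → m ≤ N → g ≤ diffCount A m) (hN : 1 ≤ N) {s : ℤ}
    (hs : s ∈ Set.Icc 0 (N : ℤ)) : g ≤ diffCount A s := by
  obtain ⟨hs₀, hsN⟩ := hs
  rcases hs₀.eq_or_lt with rfl | hs₀
  · rw [diffCount_zero]
    exact (hA 1 le_rfl (by exact_mod_cast hN)).trans (diffCount_le_card A 1)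
  · exact hA s hs₀ hsN

lemma Int.cast_injOn_of_abs_sub_lt {q : ℕ} {S : Set ℤ} (hS : ∀ c ∈ S, ∀ c' ∈ S, |c - c'| < q) :
    S.InjOn ((↑) : ℤ → ZMod q) := fun c hc c' hc' h =>
  sub_eq_zero.1 <| Int.eq_zero_of_abs_lt_dvd
    ((ZMod.intCast_eq_intCast_iff_dvd_sub c' c q).1 h.symm) (hS c hc c' hc')

lemma abs_sub_lt_of_mem_Icc_one {q c c' : ℤ} (hc : c ∈ Icc 1 q) (hc' : c' ∈ Icc 1 q) :
    |c - c'| < q := by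
  rw [mem_Icc] at hc hc'
  exact abs_sub_lt_iff.2 ⟨by omega, by omega⟩

lemma image_intCast_filter_Icc {q : ℕ} [NeZero q] (C : Finset (ZMod q)) :
    ((Icc (1 : ℤ) q).filter (fun c : ℤ => (c : ZMod q) ∈ C)).image (↑) = C := by
  have hinj : Set.InjOn ((↑) : ℤ → ZMod q) (Icc (1 : ℤ) q) :=
    Int.cast_injOn_of_abs_sub_lt fun _ hc _ hc' => abs_sub_lt_of_mem_Icc_one hc hc'
  have hsurj : (Icc (1 : ℤ) q).image ((↑) : ℤ → ZMod q) = univ := by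
    apply eq_univ_of_card
    rw [card_image_of_injOn hinj, Int.card_Icc, ZMod.card]
    simp
  rw [← filter_image (p := (· ∈ C)), hsurj, filter_univ_mem]

def blowup (q : ℤ) (A R : Finset ℤ) : Finset ℤ := (A ×ˢ R).image (fun p => q * p.1 + p.2)

section Blowup

variable {q : ℤ} (A : Finset ℤ) {R : Finset ℤ}

lemma card_blowup (hR : ∀ c ∈ R, ∀ c' ∈ R, |c - c'| < q) :
    (blowup q A R).card = A.card * R.card := by
  rw [blowup, card_image_of_injOn, card_product]
  rintro ⟨a, c⟩ hp ⟨a', c'⟩ hp' h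
  simp only [coe_product, Set.mem_prod, mem_coe] at hp hp'
  obtain ⟨rfl, rfl⟩ := Int.eq_of_mul_add_eq_mul_add (hR c hp.2 c' hp'.2) h
  rfl

lemma sum_diffCount_le_diffCount_blowup (hR : ∀ c ∈ R, ∀ c' ∈ R, |c - c'| < q) (m : ℤ) :
    ∑ c ∈ (R ×ˢ R).filter (fun c => q ∣ m - (c.1 - c.2)), diffCount A ((m - (c.1 - c.2)) / q)
      ≤ diffCount (blowup q A R) m := by
  unfold diffCount
  rw [← card_sigma]
  refine card_le_card_of_injOn (fun z => (q * z.2.1 + z.1.1, q * z.2.2 + z.1.2)) ?_ ?_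
  · rintro ⟨⟨c, c'⟩, a, a'⟩ hz
    simp only [coe_sigma, Set.mem_sigma_iff, coe_filter, mem_product, Set.mem_ofPred_eq] at hz
    obtain ⟨⟨⟨hc, hc'⟩, hdvd⟩, ⟨ha, ha'⟩, hdiff⟩ := hz
    simp only [coe_filter, mem_product, Set.mem_ofPred_eq, blowup, mem_image, Prod.exists]
    refine ⟨⟨⟨a, c, by simp [ha, hc]⟩, ⟨a', c', by simp [ha', hc']⟩⟩, ?_⟩
    have := Int.mul_ediv_cancel' hdvd
    rw [← hdiff] at this
    linarith
  · rintro ⟨⟨c₁, c₂⟩, a₁, a₂⟩ hz ⟨⟨c₁', c₂'⟩, a₁', a₂'⟩ hz' h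
    simp only [coe_sigma, Set.mem_sigma_iff, coe_filter, mem_product, Set.mem_ofPred_eq] at hz hz'
    simp only [Prod.mk.injEq] at h
    obtain ⟨rfl, rfl⟩ := Int.eq_of_mul_add_eq_mul_add (hR _ hz.1.1.1 _ hz'.1.1.1) h.1
    obtain ⟨rfl, rfl⟩ := Int.eq_of_mul_add_eq_mul_add (hR _ hz.1.1.2 _ hz'.1.1.2) h.2
    rfl

end Blowup

/-- Blow-up lemma: if `A ⊂ ℤ` is a `g₁`-difference set for `[N]` of size `k` and
`C ⊆ ℤ/qℤ` is a `g₂`-difference set of size `ℓ`, then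
`B = {qa + c : a ∈ A, c ∈ C̄}` (where `C̄ ⊆ {1,…,q}` is the set of representatives
of `C`) is a `g₁g₂`-difference set for `[qN]` of size `kℓ`. -/
theorem stmt8 (q N g₁ g₂ k ℓ : ℕ) (hq : 0 < q)
    (A : Finset ℤ) (C : Finset (ZMod q))
    (hA : ∀ m : ℤ, 1 ≤ m → m ≤ (N : ℤ) →
      g₁ ≤ ((A ×ˢ A).filter (fun p => p.1 - p.2 = m)).card)
    (hC : ∀ x : ZMod q, g₂ ≤ ((C ×ˢ C).filter (fun p => p.1 - p.2 = x)).card)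
    (hk : A.card = k) (hl : C.card = ℓ)
    (Cbar : Finset ℤ) (hCbar : Cbar = (Finset.Icc (1 : ℤ) q).filter (fun c : ℤ => ((c : ZMod q) ∈ C)))
    (B : Finset ℤ) (hB : B = (A ×ˢ Cbar).image (fun p : ℤ × ℤ => (q : ℤ) * p.1 + p.2)) :
    (∀ m : ℤ, 1 ≤ m → m ≤ (q * N : ℤ) →
      g₁ * g₂ ≤ ((B ×ˢ B).filter (fun p => p.1 - p.2 = m)).card) ∧
    B.card = k * ℓ := by
  have : NeZero q := ⟨hq.ne'⟩
  have hwin : ∀ c ∈ Cbar, ∀ c' ∈ Cbar, |c - c'| < q := fun c hc c' hc' => by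
    rw [hCbar] at hc hc'
    exact abs_sub_lt_of_mem_Icc_one (mem_filter.1 hc).1 (mem_filter.1 hc').1
  have hcast : Set.InjOn ((↑) : ℤ → ZMod q) Cbar := Int.cast_injOn_of_abs_sub_lt hwin
  have hCbar_image : Cbar.image (↑) = C := hCbar ▸ image_intCast_filter_Icc C
  change B = blowup q A Cbar at hB
  subst hB hk hl
  refine ⟨fun m hm hmN => ?_, by rw [card_blowup A hwin, ← card_image_of_injOn hcast, hCbar_image]⟩
  have hN : 1 ≤ N := by
    by_contra! h
    simp [Nat.lt_one_iff.1 h] at hmN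
    omega
  have hpairs : g₂ ≤ #((Cbar ×ˢ Cbar).filter (fun c => (q : ℤ) ∣ m - (c.1 - c.2))) := by
    calc g₂ ≤ diffCount C m := hC m
      _ = _ := by
        rw [← hCbar_image, ← card_filter_sub_eq_diffCount_image hcast]
        congr! 3 with c
        rw [← Int.cast_sub, ZMod.intCast_eq_intCast_iff_dvd_sub]
  calc g₁ * g₂ ≤ ∑ _c ∈ (Cbar ×ˢ Cbar).filter (fun c => (q : ℤ) ∣ m - (c.1 - c.2)), g₁ := by
        rw [sum_const, smul_eq_mul, mul_comm]
        exact Nat.mul_le_mul_right _ hpairs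
    _ ≤ _ := sum_le_sum fun c hc => by
        obtain ⟨hc, hdvd⟩ := mem_filter.1 hc
        exact le_diffCount_of_mem_Icc hA hN <| Int.ediv_mem_Icc_of_dvd_sub (by exact_mod_cast hq)
          (hwin _ (mem_product.1 hc).1 _ (mem_product.1 hc).2) hm hmN hdvd
    _ ≤ _ := sum_diffCount_le_diffCount_blowup A hwin m
end

section
/- If A ⊂ ℤ is a g-difference set for [N], then the function f: ℝ → ℝ defined by f(x) = √(N/g) if a/N ≤ x < (a+1)/N for some a ∈ A and f(x) = 0 otherwise, satisfies: (1) ∫_ℝ f = |A|/√(gN), and (2) the autocorrelation (f⋆f)(x) = ∫_ℝ f(t)f(x+t) dt is at least 1 for all x ∈ [0,1]. -/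
/-!
Write `f = √(N/g) ∑_{a ∈ A} 1_{[a/N, (a+1)/N)}`. Each cell has length `1/N`, which gives the
integral. Two cells of length `1/N` at offset `x` overlap in length `tent (N x - (b - a)) / N`,
so `(f ⋆ f)(x) = (1/g) ∑_{(a,b) ∈ A²} tent (N x - (a - b))`. Writing `N x = j + θ` with
`0 ≤ j ≤ N` and `0 ≤ θ < 1`, the pairs with difference `j` contribute `1 - θ` each and those with
difference `j + 1` contribute `θ` each. There are at least `g` of each kind: for `j = 0` because
the `|A|` diagonal pairs outnumber the pairs with difference `1`, and difference `j + 1` only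
matters when `θ > 0`, in which case `j + 1 ≤ N`.
-/

open Function MeasureTheory Set
open scoped Finset

def tent (s : ℝ) : ℝ := max (1 - |s|) 0

lemma tent_nonneg (s : ℝ) : 0 ≤ tent s := le_max_right _ _

lemma integral_indicator_Ico_mul_indicator_Ico (u v h : ℝ) :
    ∫ t, (Ico u (u + h)).indicator 1 t * (Ico v (v + h)).indicator 1 t = max (h - |u - v|) 0 := by
  have hprod : (fun t => (Ico u (u + h)).indicator (1 : ℝ → ℝ) t * (Ico v (v + h)).indicator 1 t)
      = (Ico u (u + h) ∩ Ico v (v + h)).indicator 1 := by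
    rw [inter_indicator_one]; rfl
  rw [hprod, integral_indicator_one (measurableSet_Ico.inter measurableSet_Ico), Set.Ico_inter_Ico,
    Real.volume_real_Ico, min_add_add_right]
  congr 1
  linarith [max_sub_min_eq_abs' u v]

def gridCell (N : ℝ) (a : ℤ) : Set ℝ := Ico (a / N) ((a + 1) / N)

section gridCell

variable {N : ℝ}

lemma mem_gridCell_iff (hN : 0 < N) {a : ℤ} {t : ℝ} : t ∈ gridCell N a ↔ ⌊t * N⌋ = a := by
  rw [gridCell, Set.mem_Ico, Int.floor_eq_iff, div_le_iff₀ hN, lt_div_iff₀ hN]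

lemma pairwise_disjoint_gridCell (hN : 0 < N) : Pairwise (Disjoint on gridCell N) :=
  fun _ _ hab => Set.disjoint_left.2 fun _ ha hb =>
    hab (((mem_gridCell_iff hN).1 ha).symm.trans ((mem_gridCell_iff hN).1 hb))

lemma gridCell_eq_Ico_add (N : ℝ) (a : ℤ) : gridCell N a = Ico (a / N) (a / N + 1 / N) := by
  rw [gridCell, add_div]

lemma indicator_biUnion_gridCell (hN : 0 < N) (A : Finset ℤ) (c t : ℝ) :
    (⋃ a ∈ A, gridCell N a).indicator (fun _ => c) t
      = c * ∑ a ∈ A, (gridCell N a).indicator 1 t := by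
  rw [Finset.indicator_biUnion_apply A _ ((pairwise_disjoint_gridCell hN).set_pairwise _),
    Finset.mul_sum]
  refine Finset.sum_congr rfl fun a _ => ?_
  by_cases ht : t ∈ gridCell N a <;> simp [ht]

lemma integrable_indicator_gridCell (N : ℝ) (a : ℤ) :
    Integrable ((gridCell N a).indicator (1 : ℝ → ℝ)) :=
  (integrable_indicator_iff measurableSet_Ico).2 (integrableOn_const measure_Ico_lt_top.ne)

lemma integral_indicator_gridCell (hN : 0 ≤ N) (a : ℤ) :
    ∫ t, (gridCell N a).indicator 1 t = 1 / N := by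
  rw [gridCell_eq_Ico_add, integral_indicator_one measurableSet_Ico, Real.volume_real_Ico,
    add_sub_cancel_left, max_eq_left (by positivity)]

lemma integral_indicator_gridCell_mul_indicator_gridCell_add (hN : 0 < N) (a b : ℤ) (x : ℝ) :
    ∫ t, (gridCell N a).indicator 1 t * (gridCell N b).indicator 1 (x + t)
      = tent (N * x - (b - a)) / N := by
  have hshift : ∀ t, (gridCell N b).indicator (1 : ℝ → ℝ) (x + t)
      = (Ico (b / N - x) (b / N - x + 1 / N)).indicator 1 t := by
    intro t
    rw [← indicator_comp_right (fun t => x + t), gridCell, preimage_const_add_Ico,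
      show ((b : ℝ) + 1) / N - x = b / N - x + 1 / N by ring]
    rfl
  have habs : |a / N - (b / N - x)| = |N * x - (b - a)| / N := by
    rw [show (a : ℝ) / N - (b / N - x) = (N * x - (b - a)) / N by field_simp; ring, abs_div,
      abs_of_pos hN]
  simp_rw [hshift, gridCell_eq_Ico_add]
  rw [integral_indicator_Ico_mul_indicator_Ico, habs, div_sub_div_same, tent,
    ← max_div_div_right hN.le, zero_div]

lemma integral_sum_indicator_gridCell_mul_sum_indicator_gridCell_add (hN : 0 < N)
    (A : Finset ℤ) (x : ℝ) :
    ∫ t, (∑ a ∈ A, (gridCell N a).indicator 1 t) * ∑ b ∈ A, (gridCell N b).indicator 1 (x + t)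
      = (∑ p ∈ A ×ˢ A, tent (N * x - (p.1 - p.2))) / N := by
  have hmeas (b : ℤ) : AEStronglyMeasurable fun t => (gridCell N b).indicator (1 : ℝ → ℝ) (x + t) :=
    ((measurable_one.indicator measurableSet_Ico).comp (measurable_const_add x)).aestronglyMeasurable
  have hbdd (b : ℤ) : ∀ᵐ t, ‖(gridCell N b).indicator (1 : ℝ → ℝ) (x + t)‖ ≤ 1 :=
    ae_of_all _ fun _ => (norm_indicator_le_norm_self _ _).trans_eq norm_one
  simp_rw [Finset.sum_mul_sum, ← Finset.sum_product_right' A A]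
  have hint (p : ℤ × ℤ) : Integrable fun t =>
      (gridCell N p.2).indicator (1 : ℝ → ℝ) t * (gridCell N p.1).indicator 1 (x + t) :=
    (integrable_indicator_gridCell N p.2).mul_bdd (hmeas p.1) (hbdd p.1)
  rw [integral_finsetSum _ fun p _ => hint p, Finset.sum_div]
  exact Finset.sum_congr rfl fun p _ =>
    integral_indicator_gridCell_mul_indicator_gridCell_add hN p.2 p.1 x

end gridCell

lemma card_filter_mul_one_sub_fract_add_card_filter_mul_fract_le_sum_tent {α : Type*}
    (s : Finset α) (d : α → ℤ) (y : ℝ) :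
    #{p ∈ s | d p = ⌊y⌋} * (1 - Int.fract y) + #{p ∈ s | d p = ⌊y⌋ + 1} * Int.fract y
      ≤ ∑ p ∈ s, tent (y - d p) := by
  have hterm (p : α) : (if d p = ⌊y⌋ then 1 - Int.fract y else 0)
      + (if d p = ⌊y⌋ + 1 then Int.fract y else 0) ≤ tent (y - d p) := by
    split_ifs with h₀ h₁ h₁
    · omega
    · rw [add_zero, tent, h₀, Int.self_sub_floor, abs_of_nonneg (Int.fract_nonneg y)]
      exact le_max_left _ _
    · rw [zero_add, tent, h₁, Int.cast_add, Int.cast_one, ← sub_sub, Int.self_sub_floor,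
        abs_of_neg (by linarith [Int.fract_lt_one y]), neg_sub, sub_sub_cancel]
      exact le_max_left _ _
    · rw [add_zero]
      exact tent_nonneg _
  calc _ = ∑ p ∈ s, ((if d p = ⌊y⌋ then 1 - Int.fract y else 0)
        + (if d p = ⌊y⌋ + 1 then Int.fract y else 0)) := by
        rw [Finset.sum_add_distrib, ← Finset.sum_filter, ← Finset.sum_filter, Finset.sum_const,
          Finset.sum_const, nsmul_eq_mul, nsmul_eq_mul]
    _ ≤ _ := Finset.sum_le_sum fun p _ => hterm p

section differences

variable {G : Type*} [AddGroup G] [DecidableEq G]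

lemma card_filter_sub_eq_le_card (A : Finset G) (m : G) : #{p ∈ A ×ˢ A | p.1 - p.2 = m} ≤ #A := by
  refine Finset.card_le_card_of_injOn Prod.snd
    (fun p hp => (Finset.mem_product.1 (Finset.mem_filter.1 hp).1).2) fun p hp q hq h => ?_
  have hp' := sub_eq_iff_eq_add.1 (Finset.mem_filter.1 hp).2
  have hq' := sub_eq_iff_eq_add.1 (Finset.mem_filter.1 hq).2
  exact Prod.ext (by rw [hp', hq', h]) h

lemma card_filter_sub_eq_zero (A : Finset G) : #{p ∈ A ×ˢ A | p.1 - p.2 = 0} = #A := by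
  simp_rw [sub_eq_zero, ← Finset.diag_eq_filter, Finset.diag_card]

end differences

def IsDifferenceSet (g N : ℕ) (A : Finset ℤ) : Prop :=
  ∀ m : ℤ, 1 ≤ m → m ≤ (N : ℤ) → g ≤ #{p ∈ A ×ˢ A | p.1 - p.2 = m}

namespace IsDifferenceSet

variable {g N : ℕ} {A : Finset ℤ}

lemma le_card_filter_sub_eq (hA : IsDifferenceSet g N A) (hN : 0 < N) {m : ℤ} (hm₀ : 0 ≤ m)
    (hmN : m ≤ N) : g ≤ #{p ∈ A ×ˢ A | p.1 - p.2 = m} := by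
  obtain rfl | hm := hm₀.eq_or_lt
  · rw [card_filter_sub_eq_zero]
    exact (hA 1 le_rfl (by exact_mod_cast hN)).trans (card_filter_sub_eq_le_card A 1)
  · exact hA m hm hmN

lemma le_sum_tent (hA : IsDifferenceSet g N A) (hN : 0 < N) {y : ℝ} (hy₀ : 0 ≤ y) (hyN : y ≤ N) :
    (g : ℝ) ≤ ∑ p ∈ A ×ˢ A, tent (y - (p.1 - p.2)) := by
  have hfloor : (g : ℝ) ≤ #{p ∈ A ×ˢ A | p.1 - p.2 = ⌊y⌋} := by
    have : (⌊y⌋ : ℝ) ≤ N := (Int.floor_le y).trans hyN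
    exact_mod_cast hA.le_card_filter_sub_eq hN (Int.floor_nonneg.2 hy₀) (by exact_mod_cast this)
  have hfloor_succ : g * Int.fract y ≤ #{p ∈ A ×ˢ A | p.1 - p.2 = ⌊y⌋ + 1} * Int.fract y := by
    obtain hθ | hθ := (Int.fract_nonneg y).eq_or_lt
    · rw [← hθ, mul_zero, mul_zero]
    · refine mul_le_mul_of_nonneg_right ?_ hθ.le
      have : (⌊y⌋ : ℝ) < N := by linarith [Int.self_sub_floor y]
      exact_mod_cast hA.le_card_filter_sub_eq hN (by positivity) (by exact_mod_cast this)
  calc (g : ℝ) = g * (1 - Int.fract y) + g * Int.fract y := by ring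
    _ ≤ _ := add_le_add (mul_le_mul_of_nonneg_right hfloor
        (sub_nonneg.2 (Int.fract_lt_one y).le)) hfloor_succ
    _ ≤ _ := by
      convert card_filter_mul_one_sub_fract_add_card_filter_mul_fract_le_sum_tent (A ×ˢ A)
        (fun p => p.1 - p.2) y using 3
      push_cast
      rfl

end IsDifferenceSet

/-- If `A ⊂ ℤ` is a `g`-difference set for `[N]`, then the step function
`f(x) = √(N/g)` for `a/N ≤ x < (a+1)/N` with `a ∈ A` (and `0` otherwise) satisfies
`∫ f = |A|/√(gN)` and `(f ⋆ f)(x) = ∫ f(t) f(x+t) dt ≥ 1` for all `x ∈ [0,1]`. -/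
theorem stmt9 (g N : ℕ) (hg : 0 < g) (hN : 0 < N) (A : Finset ℤ)
    (hA : ∀ m : ℤ, 1 ≤ m → m ≤ (N : ℤ) →
      g ≤ ((A ×ˢ A).filter (fun p => p.1 - p.2 = m)).card)
    (f : ℝ → ℝ)
    (hf : f = Set.indicator (⋃ a ∈ A, Set.Ico ((a : ℝ) / N) (((a : ℝ) + 1) / N))
      (fun _ => Real.sqrt ((N : ℝ) / g))) :
    (∫ x, f x) = (A.card : ℝ) / Real.sqrt (g * N) ∧
    ∀ x ∈ Set.Icc (0 : ℝ) 1, 1 ≤ ∫ t, f t * f (x + t) := by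
  have hN' : (0 : ℝ) < N := by exact_mod_cast hN
  have hg' : (0 : ℝ) < g := by exact_mod_cast hg
  set c := √((N : ℝ) / g) with hc
  replace hf : f = fun t => c * ∑ a ∈ A, (gridCell N a).indicator 1 t :=
    hf.trans (funext (indicator_biUnion_gridCell hN' A c))
  subst hf
  constructor
  · rw [integral_const_mul, integral_finsetSum _ fun a _ => integrable_indicator_gridCell _ a,
      Finset.sum_congr rfl fun a _ => integral_indicator_gridCell hN'.le a, Finset.sum_const,
      nsmul_eq_mul, hc, Real.sqrt_div' _ hg'.le, Real.sqrt_mul hg'.le]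
    field_simp
    rw [Real.sq_sqrt hN'.le, mul_comm]
  · rintro x ⟨hx₀, hx₁⟩
    simp_rw [mul_mul_mul_comm c, integral_const_mul]
    rw [integral_sum_indicator_gridCell_mul_sum_indicator_gridCell_add hN', ← sq,
      hc, Real.sq_sqrt (by positivity)]
    have hsum := IsDifferenceSet.le_sum_tent hA hN (mul_nonneg hN'.le hx₀)
      (mul_le_of_le_one_right hN'.le hx₁)
    calc (1 : ℝ) = g / g := (div_self hg'.ne').symm
      _ ≤ (∑ p ∈ A ×ˢ A, tent (N * x - (p.1 - p.2))) / g := by gcongr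
      _ = _ := by field_simp
end

section
/- Let G be a finite abelian group and m ∈ G an element of order greater than 2, and let H = ⟨m⟩. Then there exists a partition G = S1 ∪ S2 ∪ S3 into three disjoint sets such that no S_j contains both x and x + m for any x ∈ G, and each |S_j| ≥ |G|/5. -/
open Finset

/-- coloring of residue `k` for modulus with `n % 3 = r`. -/
def col3 (r k : ℕ) : ℕ := if r = 1 ∧ k = 0 then 2 else k % 3

lemma col3_lt (r k : ℕ) : col3 r k < 3 := by unfold col3; split <;> omega

lemma col3_ne {n v : ℕ} (hn : 3 ≤ n) (hv : v < n) :
    col3 (n % 3) v ≠ col3 (n % 3) ((v + 1) % n) := by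
  unfold col3
  rcases Nat.lt_or_ge (v + 1) n with h | h
  · rw [Nat.mod_eq_of_lt h]
    split_ifs <;> simp_all <;> omega
  · have hvn : (v + 1) % n = 0 := by
      have : v + 1 = n := by omega
      simp [this]
    rw [hvn]
    split_ifs <;> simp_all <;> omega

def cnt (n j : ℕ) : ℕ := ((range n).filter (fun k => col3 (n % 3) k = j)).card

lemma col3_of_pos (r : ℕ) {k : ℕ} (hk : 0 < k) : col3 r k = k % 3 := by
  unfold col3; rw [if_neg]; omega

lemma cnt_step (n j : ℕ) (hn : 3 ≤ n) (hj : j < 3) : cnt (n + 3) j = cnt n j + 1 := by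
  unfold cnt
  have hr : (n + 3) % 3 = n % 3 := by omega
  rw [hr, Finset.card_filter, Finset.card_filter,
    show n + 3 = n + 2 + 1 from rfl, Finset.sum_range_succ,
    show n + 2 = n + 1 + 1 from rfl, Finset.sum_range_succ, Finset.sum_range_succ,
    col3_of_pos _ (show 0 < n by omega), col3_of_pos _ (show 0 < n + 1 by omega),
    col3_of_pos _ (show 0 < n + 2 by omega)]
  split_ifs <;> omega

lemma le_cnt : ∀ n, 3 ≤ n → ∀ j, j < 3 → n ≤ 5 * cnt n j := by
  intro n
  induction n using Nat.strong_induction_on with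
  | _ n ih =>
    intro hn j hj
    rcases Nat.lt_or_ge n 6 with h | h
    · interval_cases n <;> interval_cases j <;> decide
    · obtain ⟨k, rfl⟩ : ∃ k, n = k + 3 := ⟨n - 3, by omega⟩
      have h1 := ih k (by omega) (by omega) j hj
      rw [cnt_step k j (by omega) hj]
      omega

/-- Let `G` be a finite abelian group and `m ∈ G` an element of order greater
than `2`.  Then there is a partition `G = S₁ ∪ S₂ ∪ S₃` into three pairwise
disjoint sets such that no part contains both `x` and `x + m` for any `x ∈ G`,
and each part has size at least `|G|/5`. -/
theorem stmt15 {G : Type*} [AddCommGroup G] [Fintype G] [DecidableEq G]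
    (m : G) (hm : 2 < addOrderOf m) :
    ∃ S : Fin 3 → Finset G,
      (∀ i j, i ≠ j → Disjoint (S i) (S j)) ∧
      (S 0 ∪ S 1 ∪ S 2 = Finset.univ) ∧
      (∀ i, ∀ x : G, ¬(x ∈ S i ∧ x + m ∈ S i)) ∧
      (∀ i, (Fintype.card G : ℝ) / 5 ≤ (S i).card) := by
  classical
  set n := addOrderOf m with hn
  have hn3 : 3 ≤ n := hm
  haveI : NeZero n := ⟨by omega⟩
  haveI : Fact (1 < n) := ⟨by omega⟩
  set H := AddSubgroup.zmultiples m with hH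
  haveI : Fintype (G ⧸ H) := Fintype.ofFinite _
  -- smul mod lemmas
  have hnm : n • m = 0 := addOrderOf_nsmul_eq_zero m
  have hmul0 : ∀ b : ℕ, (n * b) • m = 0 := by
    intro b
    rw [mul_nsmul, hnm, smul_zero]
  have hmod : ∀ a : ℕ, (a % n) • m = a • m := by
    intro a
    conv_rhs => rw [← Nat.mod_add_div a n]
    rw [add_nsmul, hmul0, add_zero]
  have hzdvd : ∀ z : ℤ, (n : ℤ) ∣ z → z • m = 0 := by
    intro z hz
    exact (addOrderOf_dvd_iff_zsmul_eq_zero).mp hz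
  -- the bijection
  set f : (G ⧸ H) × ZMod n → G := fun p => p.1.out + p.2.val • m with hf
  have hfbij : Function.Bijective f := by
    constructor
    · rintro ⟨q, k⟩ ⟨q', k'⟩ hqk
      have hfe : q.out + k.val • m = q'.out + k'.val • m := hqk
      have hmem : ∀ k : ZMod n, k.val • m ∈ H := by
        intro k
        exact AddSubgroup.mem_zmultiples_iff.mpr ⟨(k.val : ℤ), natCast_zsmul m k.val⟩
      have hq : q = q' := by
        have h1 : (QuotientAddGroup.mk (q.out + k.val • m) : G ⧸ H) = q := by
          rw [QuotientAddGroup.mk_add_of_mem q.out (hmem k), QuotientAddGroup.out_eq']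
        have h2 : (QuotientAddGroup.mk (q'.out + k'.val • m) : G ⧸ H) = q' := by
          rw [QuotientAddGroup.mk_add_of_mem q'.out (hmem k'), QuotientAddGroup.out_eq']
        rw [← h1, ← h2, hfe]
      subst hq
      have hkk : k.val • m = k'.val • m := add_left_cancel hfe
      have hsm : ((k.val : ℤ) - (k'.val : ℤ)) • m = 0 := by
        rw [sub_zsmul, natCast_zsmul, natCast_zsmul, hkk]
        abel
      have hdvd : (n : ℤ) ∣ ((k.val : ℤ) - (k'.val : ℤ)) :=
        (addOrderOf_dvd_iff_zsmul_eq_zero).mpr hsm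
      have hv' : k.val = k'.val := by
        have h1 := ZMod.val_lt k
        have h2 := ZMod.val_lt k'
        have h0 := Int.eq_zero_of_dvd_of_natAbs_lt_natAbs hdvd (by omega)
        omega
      exact Prod.ext rfl (ZMod.val_injective n hv')
    · intro x
      set q : G ⧸ H := QuotientAddGroup.mk x with hq
      have hxq : -q.out + x ∈ H := (QuotientAddGroup.eq).mp (QuotientAddGroup.out_eq' q)
      obtain ⟨z, hz⟩ := AddSubgroup.mem_zmultiples_iff.mp hxq
      refine ⟨⟨q, (z : ZMod n)⟩, ?_⟩
      have hv : (((z : ZMod n).val : ℤ)) • m = z • m := by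
        have hdvd : (n : ℤ) ∣ (z - ((z : ZMod n).val : ℤ)) := by
          rw [← ZMod.intCast_zmod_eq_zero_iff_dvd]
          push_cast
          rw [ZMod.natCast_rightInverse ((z : ZMod n))]
          ring
        have h := hzdvd _ hdvd
        rw [sub_zsmul] at h
        exact (add_neg_eq_zero.mp h).symm
      show q.out + ((z : ZMod n)).val • m = x
      rw [← natCast_zsmul, hv, hz]
      abel
  set e : (G ⧸ H) × ZMod n ≃ G := Equiv.ofBijective f hfbij with he
  set c : G → ℕ := fun x => col3 (n % 3) ((e.symm x).2.val) with hc
  have hclt : ∀ x, c x < 3 := fun x => col3_lt _ _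
  -- key step: c (x + m) uses index + 1
  have key : ∀ (q : G ⧸ H) (k : ZMod n), e (q, k + 1) = e (q, k) + m := by
    intro q k
    show q.out + (k + 1).val • m = q.out + k.val • m + m
    rw [ZMod.val_add, ZMod.val_one, hmod, add_nsmul, one_nsmul, add_assoc]
  have hstep : ∀ x : G, (e.symm (x + m)) = ((e.symm x).1, (e.symm x).2 + 1) := by
    intro x
    apply e.injective
    rw [Equiv.apply_symm_apply, key, Prod.mk.eta, Equiv.apply_symm_apply]
  have hcne : ∀ x : G, c x ≠ c (x + m) := by
    intro x
    rw [hc]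
    simp only [hstep x]
    rw [ZMod.val_add, ZMod.val_one]
    exact col3_ne hn3 (ZMod.val_lt _)
  refine ⟨fun j => univ.filter (fun x => c x = (j : ℕ)), ?_, ?_, ?_, ?_⟩
  · intro i j hij
    simp only [Finset.disjoint_left, Finset.mem_filter]
    rintro a ⟨-, h1⟩ ⟨-, h2⟩
    exact hij (Fin.ext (h1 ▸ h2 ▸ rfl))
  · ext x
    have := hclt x
    simp only [Finset.mem_union, Finset.mem_filter, Finset.mem_univ, true_and, iff_true]
    omega
  · rintro i x ⟨h1, h2⟩
    simp only [Finset.mem_filter] at h1 h2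
    exact hcne x (h1.2.trans h2.2.symm)
  · intro j
    -- compute cardinality
    have hcard : (univ.filter (fun x => c x = (j : ℕ))).card
        = Fintype.card (G ⧸ H) * cnt n (j : ℕ) := by
      have h1 : (univ.filter (fun x => c x = (j : ℕ))).card
          = (univ.filter (fun p : (G ⧸ H) × ZMod n =>
              col3 (n % 3) p.2.val = (j : ℕ))).card := by
        refine (Finset.card_equiv e ?_).symm
        intro p
        simp [hc, Equiv.symm_apply_apply]
      have h2 : (univ.filter (fun p : (G ⧸ H) × ZMod n =>
              col3 (n % 3) p.2.val = (j : ℕ)))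
          = univ ×ˢ (univ.filter (fun k : ZMod n => col3 (n % 3) k.val = (j : ℕ))) := by
        ext p
        simp [Finset.mem_product]
      have h3 : (univ.filter (fun k : ZMod n => col3 (n % 3) k.val = (j : ℕ))).card
          = cnt n (j : ℕ) := by
        unfold cnt
        refine Finset.card_bij' (fun k _ => k.val) (fun v _ => (v : ZMod n)) ?_ ?_ ?_ ?_
        · intro k hk
          simp only [Finset.mem_filter, Finset.mem_univ, true_and] at hk ⊢
          exact ⟨Finset.mem_range.mpr (ZMod.val_lt k), hk⟩
        · intro v hv
          simp only [Finset.mem_filter, Finset.mem_range] at hv ⊢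
          rw [ZMod.val_cast_of_lt hv.1]
          exact ⟨Finset.mem_univ _, hv.2⟩
        · intro k hk
          exact ZMod.natCast_rightInverse k
        · intro v hv
          simp only [Finset.mem_filter, Finset.mem_range] at hv
          exact ZMod.val_cast_of_lt hv.1
      rw [h1, h2, Finset.card_product, Finset.card_univ, h3]
    have hG : Fintype.card G = Fintype.card (G ⧸ H) * n := by
      rw [← Fintype.card_congr e, Fintype.card_prod, ZMod.card]
    have hle : Fintype.card G ≤ 5 * (univ.filter (fun x => c x = (j : ℕ))).card := by
      rw [hG, hcard]
      have := le_cnt n hn3 (j : ℕ) j.isLt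
      calc Fintype.card (G ⧸ H) * n ≤ Fintype.card (G ⧸ H) * (5 * cnt n (j : ℕ)) :=
            Nat.mul_le_mul_left _ this
        _ = 5 * (Fintype.card (G ⧸ H) * cnt n (j : ℕ)) := by ring
    rw [div_le_iff₀ (by norm_num : (0:ℝ) < 5)]
    have : (Fintype.card G : ℝ) ≤ ((5 * (univ.filter (fun x => c x = (j : ℕ))).card : ℕ) : ℝ) := by
      exact_mod_cast hle
    push_cast at this
    linarith
end
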